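/- Fix δ > −1. For every i ≥ 1, Σ_{m=i+1}^∞ ((m+δ)/(2+δ)) (b_1^{(i)})² p_m = (Γ(3+2δ) / (Γ(2+δ) (Γ(1+δ))²)) · Γ(i+2+δ) (Γ(i+δ))² / (Γ(i+3+2δ) ((i−1)!)²); in particular the series on the left converges. -/

import Mathlib

/-!
Since `(m + δ) Γ(m + δ) = Γ(m + 1 + δ)`, the `m`-th term is a constant multiple of
`Γ(m + 1 + δ) / Γ(m + 3 + 2δ)`. Such ratios telescope: for `F y = Γ(y) / Γ(y + g)` the functional
equation gives `Γ(y) / Γ(y + g + 1) = (F y - F (y + 1)) / g`, and `F (n + x) → 0` for `g > 0`, so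
`∑ₙ Γ(n + x) / Γ(n + x + g + 1) = Γ(x) / (g Γ(x + g))`. Take `x = i + 2 + δ` and `g = 1 + δ`.
-/

open Finset

/-- `bcoef δ k j` is `b_j^{(k)} = (−1)^{k−j} Γ(k+δ)/((k−j)! Γ(j+δ))` for `j ≤ k`,
with the convention `b_j^{(k)} = 0` for `j > k`. -/
noncomputable def bcoef (δ : ℝ) (k j : ℕ) : ℝ :=
  if j ≤ k then
    (-1 : ℝ) ^ (k - j) * Real.Gamma (k + δ) / ((Nat.factorial (k - j)) * Real.Gamma (j + δ))
  else 0

/-- `pk δ k` is the limiting degree frequency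
`p_k = c(δ) Γ(k+δ)/Γ(k+3+2δ)` with `c(δ) = (2+δ)Γ(3+2δ)/Γ(1+δ)`, and `p_0 = 0`. -/
noncomputable def pk (δ : ℝ) (k : ℕ) : ℝ :=
  if k = 0 then 0
  else (2 + δ) * Real.Gamma (3 + 2 * δ) / Real.Gamma (1 + δ)
    * Real.Gamma (k + δ) / Real.Gamma (k + 3 + 2 * δ)

open Filter Topology

lemma Antitone.hasSum_sub_succ {F : ℕ → ℝ} {L : ℝ} (hF : Antitone F)
    (hL : Tendsto F atTop (𝓝 L)) : HasSum (fun n => F n - F (n + 1)) (F 0 - L) := by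
  rw [hasSum_iff_tendsto_nat_of_nonneg fun n => sub_nonneg.2 (hF n.le_succ)]
  simpa only [Finset.sum_range_sub'] using tendsto_const_nhds.sub hL

lemma HasSum.ite_le_of_nat_add {G : Type*} [AddCommGroup G] [TopologicalSpace G]
    [IsTopologicalAddGroup G] {f : ℕ → G} {a : G} (k : ℕ) (h : HasSum (fun n => f (n + k)) a) :
    HasSum (fun n => if k ≤ n then f n else 0) a := by
  rw [← hasSum_nat_add_iff' k, Finset.sum_eq_zero fun n hn => if_neg (by simpa using hn),
    sub_zero]
  simpa using h

namespace Real

variable {x g : ℝ}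

lemma Gamma_add_one_div_Gamma_add_one_add (hx : x ≠ 0) (hxg : x + g ≠ 0) :
    Gamma (x + 1) / Gamma (x + 1 + g) = x / (x + g) * (Gamma x / Gamma (x + g)) := by
  rw [add_right_comm, Gamma_add_one hx, Gamma_add_one hxg, mul_div_mul_comm]

lemma Gamma_div_Gamma_add_add_one (hg : g ≠ 0) (hx : x ≠ 0) (hxg : x + g ≠ 0) :
    Gamma x / Gamma (x + g + 1) =
      (Gamma x / Gamma (x + g) - Gamma (x + 1) / Gamma (x + 1 + g)) / g := by
  rw [Gamma_add_one_div_Gamma_add_one_add hx hxg, Gamma_add_one hxg, ← div_div]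
  field_simp
  ring

lemma Gamma_natCast_succ_add_div (n : ℕ) (hx : 0 < x) (hg : 0 ≤ g) :
    Gamma ((n + 1 : ℕ) + x) / Gamma ((n + 1 : ℕ) + x + g) =
      (n + x) / (n + x + g) * (Gamma (n + x) / Gamma (n + x + g)) := by
  have hnx : (0 : ℝ) < n + x := by positivity
  rw [Nat.cast_succ, add_right_comm (n : ℝ) 1 x]
  exact Gamma_add_one_div_Gamma_add_one_add hnx.ne' (by positivity)

lemma antitone_Gamma_natCast_add_div (hx : 0 < x) (hg : 0 ≤ g) :
    Antitone fun n : ℕ => Gamma (n + x) / Gamma (n + x + g) := by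
  refine antitone_nat_of_succ_le fun n => ?_
  rw [Gamma_natCast_succ_add_div n hx hg]
  refine mul_le_of_le_one_left ?_ (div_le_one_of_le₀ (by linarith) (by positivity))
  exact div_nonneg (Gamma_pos_of_pos (by positivity)).le (Gamma_pos_of_pos (by positivity)).le

lemma tendsto_Gamma_natCast_add_div (hx : 0 < x) (hg : 0 < g) :
    Tendsto (fun n : ℕ => Gamma (n + x) / Gamma (n + x + g)) atTop (𝓝 0) := by
  set F : ℕ → ℝ := fun n => Gamma (n + x) / Gamma (n + x + g)
  have hpos : ∀ n, 0 < F n := fun n =>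
    div_pos (Gamma_pos_of_pos (by positivity)) (Gamma_pos_of_pos (by positivity))
  have hanti : Antitone F := antitone_Gamma_natCast_add_div hx hg.le
  have hbdd : BddBelow (Set.range F) := ⟨0, by rintro _ ⟨n, rfl⟩; exact (hpos n).le⟩
  have hlim := tendsto_atTop_ciInf hanti hbdd
  suffices hL : ⨅ n, F n = 0 by rwa [hL] at hlim
  -- A positive limit would make the summable differences `g F n / (n + x + g)` dominate a
  -- multiple of the harmonic series.
  by_contra hL
  have hLpos : 0 < ⨅ n, F n := (le_ciInf fun n => (hpos n).le).lt_of_ne' hL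
  have hdiff : ∀ n : ℕ, F n - F (n + 1) = g * F n / (n + x + g) := fun n => by
    simp only [F]
    rw [Gamma_natCast_succ_add_div n hx hg.le]
    field_simp
    ring
  have hharm : Summable fun n : ℕ => 1 / |n + (x + g)| ^ (1 : ℝ) := by
    refine (summable_mul_left_iff (mul_pos hg hLpos).ne').1 <|
      (hanti.hasSum_sub_succ hlim).summable.of_nonneg_of_le (fun n => ?_) fun n => ?_
    · positivity
    · rw [hdiff, abs_of_pos (by positivity), Real.rpow_one, ← add_assoc, mul_one_div]
      gcongr
      exact ciInf_le hbdd n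
  exact lt_irrefl _ ((summable_one_div_nat_add_rpow _ _).1 hharm)

theorem hasSum_Gamma_natCast_add_div (hx : 0 < x) (hg : 0 < g) :
    HasSum (fun n : ℕ => Gamma (n + x) / Gamma (n + x + g + 1))
      (Gamma x / (g * Gamma (x + g))) := by
  have hterm : ∀ n : ℕ, Gamma (n + x) / Gamma (n + x + g + 1) =
      (Gamma (n + x) / Gamma (n + x + g) -
        Gamma ((n + 1 : ℕ) + x) / Gamma ((n + 1 : ℕ) + x + g)) / g := fun n => by
    rw [Gamma_div_Gamma_add_add_one hg.ne' (by positivity) (by positivity), Nat.cast_succ,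
      add_right_comm (n : ℝ) 1 x]
  have hsum := ((antitone_Gamma_natCast_add_div hx hg.le).hasSum_sub_succ
    (tendsto_Gamma_natCast_add_div hx hg)).div_const g
  rw [Nat.cast_zero, zero_add, sub_zero, div_div, mul_comm] at hsum
  rwa [funext hterm]

end Real

open Real

lemma bcoef_one_sq {δ : ℝ} {k : ℕ} (hk : 1 ≤ k) :
    bcoef δ k 1 ^ 2 = (Gamma (k + δ) / ((k - 1).factorial * Gamma (1 + δ))) ^ 2 := by
  rw [bcoef, if_pos hk, mul_div_assoc, mul_pow, ← pow_mul, Nat.cast_one,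
    (Even.mul_left even_two _).neg_one_pow, one_mul]

lemma add_div_mul_pk {δ : ℝ} (hδ : -1 < δ) {m : ℕ} (hm : m ≠ 0) :
    (m + δ) / (2 + δ) * pk δ m =
      Gamma (3 + 2 * δ) / Gamma (1 + δ) * (Gamma (m + 1 + δ) / Gamma (m + 3 + 2 * δ)) := by
  have hmδ : (m : ℝ) + δ ≠ 0 := by
    have : (1 : ℝ) ≤ m := by exact_mod_cast Nat.one_le_iff_ne_zero.2 hm
    linarith
  have h2δ : 2 + δ ≠ 0 := by linarith
  rw [pk, if_neg hm, add_right_comm (m : ℝ) 1 δ, Gamma_add_one hmδ]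
  field_simp

/-- For every `i ≥ 1`, the series `∑_{m=i+1}^∞ ((m+δ)/(2+δ)) (b_1^{(i)})² p_m`
converges and its sum equals
`(Γ(3+2δ)/(Γ(2+δ) Γ(1+δ)²)) Γ(i+2+δ) Γ(i+δ)² / (Γ(i+3+2δ) ((i−1)!)²)`. -/
theorem tail_series_bcoef_pk (δ : ℝ) (hδ : -1 < δ) (i : ℕ) (hi : 1 ≤ i) :
    Summable (fun m : ℕ =>
      if i + 1 ≤ m then ((m : ℝ) + δ) / (2 + δ) * (bcoef δ i 1) ^ 2 * pk δ m else 0) ∧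
    (∑' m : ℕ,
        if i + 1 ≤ m then ((m : ℝ) + δ) / (2 + δ) * (bcoef δ i 1) ^ 2 * pk δ m else 0)
      = Real.Gamma (3 + 2 * δ) / (Real.Gamma (2 + δ) * (Real.Gamma (1 + δ)) ^ 2)
        * (Real.Gamma (i + 2 + δ) * (Real.Gamma (i + δ)) ^ 2
            / (Real.Gamma (i + 3 + 2 * δ) * ((Nat.factorial (i - 1) : ℝ)) ^ 2)) := by
  have h1δ : 0 < 1 + δ := by linarith
  set C := bcoef δ i 1 ^ 2 * (Gamma (3 + 2 * δ) / Gamma (1 + δ)) with hC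
  have hseries : (fun m : ℕ =>
      if i + 1 ≤ m then ((m : ℝ) + δ) / (2 + δ) * bcoef δ i 1 ^ 2 * pk δ m else 0) =
      fun m => if i + 1 ≤ m then C * (Gamma (m + 1 + δ) / Gamma (m + 3 + 2 * δ)) else 0 := by
    refine funext fun m => if_ctx_congr Iff.rfl (fun hm => ?_) fun _ => rfl
    rw [mul_right_comm, add_div_mul_pk hδ (by omega), mul_comm, mul_assoc]
  have hshift : HasSum (fun n : ℕ => C * (Gamma ((n + (i + 1) : ℕ) + 1 + δ) /
      Gamma ((n + (i + 1) : ℕ) + 3 + 2 * δ)))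
      (C * (Gamma (i + 2 + δ) / ((1 + δ) * Gamma (i + 3 + 2 * δ)))) := by
    have h := (hasSum_Gamma_natCast_add_div (x := i + 2 + δ)
      (by linarith [i.cast_nonneg (α := ℝ)]) h1δ).mul_left C
    have e1 : ∀ n : ℕ, ((n + (i + 1) : ℕ) : ℝ) + 1 + δ = n + (i + 2 + δ) := fun n => by
      push_cast; ring
    have e2 : ∀ n : ℕ, ((n + (i + 1) : ℕ) : ℝ) + 3 + 2 * δ = n + (i + 2 + δ) + (1 + δ) + 1 :=
      fun n => by push_cast; ring
    have e3 : (i : ℝ) + 3 + 2 * δ = i + 2 + δ + (1 + δ) := by ring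
    simpa only [e1, e2, e3] using h
  have hsum := HasSum.ite_le_of_nat_add
    (f := fun m : ℕ => C * (Gamma (m + 1 + δ) / Gamma (m + 3 + 2 * δ))) (i + 1) hshift
  rw [hseries]
  refine ⟨hsum.summable, hsum.tsum_eq.trans ?_⟩
  rw [hC, bcoef_one_sq hi, show (2 : ℝ) + δ = 1 + δ + 1 by ring, Gamma_add_one h1δ.ne']
  field_simp
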